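/- arXiv:1702.06567 — 2 statements merged into one kernel-verified Lean document; each statement's English description precedes it below -/
import Mathlib

section
/- In a CAT(-1) space X with ideal boundary X(∞), for a fixed basepoint x the function D_x(ξ,η) = exp(-(ξ|η)_x), where (ξ|η)_x is the Gromov product at x of boundary points ξ, η, defines a metric on X(∞). -/
open Filter

/-- An abstract model of a CAT(-1) Hadamard manifold together with its ideal
boundary: a geodesic metric space satisfying the CAT(-1) comparison inequality
(in hyperbolic law-of-cosines form), equipped with unit-speed geodesic rays to
boundary points, Busemann cocycles and Gromov products of boundary points,
both obtained as limits along rays. -/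
structure CATm1Boundary where
  X : Type
  [inst : MetricSpace X]
  /-- CAT(-1) comparison inequality for a point `m` on a geodesic from `y` to `z`. -/
  comparison : ∀ x y z m : X, dist y m + dist m z = dist y z →
    Real.cosh (dist x m) * Real.sinh (dist y z) ≤
      Real.cosh (dist x y) * Real.sinh (dist m z) +
        Real.cosh (dist x z) * Real.sinh (dist y m)
  /-- midpoints exist (`X` is a geodesic space). -/
  mid : ∀ y z : X, ∃ m : X, dist y m = dist y z / 2 ∧ dist m z = dist y z / 2
  /-- the ideal boundary `X(∞)`. -/
  bdry : Type
  /-- `ray x ξ` is the unit-speed geodesic ray from `x` to the boundary point `ξ`. -/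
  ray : X → bdry → ℝ → X
  ray_zero : ∀ x ξ, ray x ξ 0 = x
  ray_isom : ∀ x ξ s t, 0 ≤ s → 0 ≤ t → dist (ray x ξ s) (ray x ξ t) = |s - t|
  /-- the Busemann cocycle `b_ξ(x,y) = lim_{z→ξ} d(x,z) - d(z,y)`. -/
  bus : bdry → X → X → ℝ
  bus_lim : ∀ (ξ : bdry) (x y z : X),
    Tendsto (fun t => dist x (ray z ξ t) - dist (ray z ξ t) y) atTop (nhds (bus ξ x y))
  /-- the Gromov product `(ξ|η)_x` of two distinct boundary points. -/
  gp : X → bdry → bdry → ℝ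
  gp_lim : ∀ (x : X) (ξ η : bdry), ξ ≠ η →
    Tendsto (fun t => t - dist (ray x ξ t) (ray x η t) / 2) atTop (nhds (gp x ξ η))

attribute [instance] CATm1Boundary.inst


section helpers
open Real

/-- identity 1 -/
private lemma catm1_id1 (d T : ℝ) :
    (exp (d - T) + exp (-d - T)) * (1 - exp (-(2*T))) =
      4 * exp (-(2*T)) * (Real.cosh d * Real.sinh T) := by
  simp only [Real.cosh_eq, Real.sinh_eq, two_mul, neg_add, Real.exp_sub, Real.exp_add,
    Real.exp_neg]
  field_simp
  ring

/-- identity 2 -/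
private lemma catm1_id2 (t T : ℝ) :
    (1 + exp (-(2*T))) * (exp (-t) - exp t * exp (-(2*T))) =
      4 * exp (-(2*T)) * (Real.cosh T * Real.sinh (T - t)) := by
  simp only [Real.cosh_eq, Real.sinh_eq, two_mul, neg_add, neg_sub, Real.exp_sub, Real.exp_add,
    Real.exp_neg]
  field_simp
  ring

/-- identity 3 -/
private lemma catm1_id3 (d t T : ℝ) :
    Real.sinh t * (2 * (exp (d - 2*T) + exp (-d - 2*T))) =
      4 * exp (-(2*T)) * (Real.cosh d * Real.sinh t) := by
  simp only [Real.cosh_eq, Real.sinh_eq, two_mul, neg_add, Real.exp_sub, Real.exp_add,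
    Real.exp_neg]
  field_simp
  ring

private lemma catm1_tendsto_exp_neg :
    Tendsto (fun T : ℝ => exp (-T)) atTop (nhds 0) :=
  Real.tendsto_exp_atBot.comp tendsto_neg_atTop_atBot

private lemma catm1_tendsto_exp_neg2 :
    Tendsto (fun T : ℝ => exp (-(2*T))) atTop (nhds 0) := by
  have h := catm1_tendsto_exp_neg.mul catm1_tendsto_exp_neg
  have heq : ∀ T : ℝ, exp (-T) * exp (-T) = exp (-(2*T)) := by
    intro T; rw [← Real.exp_add]; ring_nf
  simpa [heq] using h

/-- The pure-real "optimization over t" lemma:  for `0 < A`, `0 < B`, `A + B < 1`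
there is a `t ≥ 0` with
`(e^{-t} + sinh t (2A²)) (e^{-t} + sinh t (2B²)) ≤ (A+B)²`. -/
private lemma catm1_exists_t (A B : ℝ) (hA0 : 0 < A) (hB0 : 0 < B) (hAB : A + B < 1) :
    ∃ t : ℝ, 0 ≤ t ∧
      (exp (-t) + Real.sinh t * (2 * A^2)) * (exp (-t) + Real.sinh t * (2 * B^2))
        ≤ (A + B)^2 := by
  have hA1 : A < 1 := by linarith
  have hB1 : B < 1 := by linarith
  have hc0 : 0 < A * B := mul_pos hA0 hB0
  have hD0 : 0 < (1 - A^2) * (1 - B^2) := by nlinarith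
  have hsDpos : 0 < Real.sqrt ((1 - A^2) * (1 - B^2)) := Real.sqrt_pos.2 hD0
  have hsD : Real.sqrt ((1 - A^2) * (1 - B^2)) * Real.sqrt ((1 - A^2) * (1 - B^2))
      = (1 - A^2) * (1 - B^2) := Real.mul_self_sqrt hD0.le
  have hcleD : A * B ≤ Real.sqrt ((1 - A^2) * (1 - B^2)) := by
    have h1 : (A*B)^2 ≤ (1 - A^2) * (1 - B^2) := by nlinarith
    calc A*B = Real.sqrt ((A*B)^2) := (Real.sqrt_sq hc0.le).symm
      _ ≤ _ := Real.sqrt_le_sqrt h1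
  have hDle : Real.sqrt ((1 - A^2) * (1 - B^2)) ≤ 1 + A*B := by
    have h1 : (1 - A^2) * (1 - B^2) ≤ (1 + A*B)^2 := by nlinarith
    calc Real.sqrt ((1 - A^2) * (1 - B^2)) ≤ Real.sqrt ((1 + A*B)^2) := Real.sqrt_le_sqrt h1
      _ = 1 + A*B := Real.sqrt_sq (by positivity)
  set v : ℝ := A*B / Real.sqrt ((1 - A^2) * (1 - B^2)) with hv
  have hv0 : 0 < v := div_pos hc0 hsDpos
  have hv1 : v ≤ 1 := (div_le_one hsDpos).2 hcleD
  set s : ℝ := Real.sqrt v with hsdef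
  have hs0 : 0 < s := Real.sqrt_pos.2 hv0
  have hs2 : s^2 = v := Real.sq_sqrt hv0.le
  have hs1 : s ≤ 1 := by
    rw [hsdef, show (1:ℝ) = Real.sqrt 1 by simp]
    exact Real.sqrt_le_sqrt hv1
  refine ⟨-Real.log s, ?_, ?_⟩
  · simpa using Real.log_nonpos hs0.le hs1
  have hexpnt : exp (-(-Real.log s)) = s := by rw [neg_neg, Real.exp_log hs0]
  have hexpt : exp (-Real.log s) = s⁻¹ := by
    rw [← Real.log_inv, Real.exp_log (by positivity)]
  have hsinh : Real.sinh (-Real.log s) = (s⁻¹ - s)/2 := by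
    rw [Real.sinh_eq, hexpt, hexpnt]
  rw [hexpnt, hsinh]
  -- key algebraic facts
  have hvD : s^2 * Real.sqrt ((1 - A^2) * (1 - B^2)) = A*B := by
    rw [hs2, hv]; field_simp
  have hv4 : s^2 * s^2 * ((1 - A^2) * (1 - B^2)) = (A*B) * (A*B) := by
    calc s^2 * s^2 * ((1 - A^2) * (1 - B^2))
        = s^2 * s^2 * (Real.sqrt ((1 - A^2) * (1 - B^2)) *
            Real.sqrt ((1 - A^2) * (1 - B^2))) := by rw [hsD]
      _ = (s^2 * Real.sqrt ((1 - A^2) * (1 - B^2))) *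
          (s^2 * Real.sqrt ((1 - A^2) * (1 - B^2))) := by ring
      _ = (A*B) * (A*B) := by rw [hvD]
  have hcore : (A*B)*(A*B) ≤ s^2*((A*B)*(A*B) + A*B) := by
    have h1 : A*B ≤ s^2*(1 + A*B) := by
      calc A*B = s^2 * Real.sqrt ((1 - A^2) * (1 - B^2)) := hvD.symm
        _ ≤ s^2*(1 + A*B) := by
            apply mul_le_mul_of_nonneg_left hDle (by positivity)
    nlinarith [h1, hc0.le]
  have hs' : s ≠ 0 := hs0.ne'
  have expand : (s + (s⁻¹ - s)/2*(2*A^2)) * (s + (s⁻¹ - s)/2*(2*B^2)) * s^2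
      = (s^2*(1-A^2) + A^2) * (s^2*(1-B^2) + B^2) := by
    field_simp
    ring
  have hfin : (s^2*(1-A^2) + A^2) * (s^2*(1-B^2) + B^2) ≤ (A+B)^2 * s^2 := by
    nlinarith [hv4, hcore]
  have hs2pos : (0:ℝ) < s^2 := by positivity
  have h2 : (s + (s⁻¹ - s)/2*(2*A^2)) * (s + (s⁻¹ - s)/2*(2*B^2)) * s^2
      ≤ (A+B)^2 * s^2 := by rw [expand]; exact hfin
  exact le_of_mul_le_mul_right h2 hs2pos

end helpers

section geo
open Real

namespace CATm1Boundary

variable (S : CATm1Boundary) (x : S.X)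

lemma dist_ray_zero (ξ : S.bdry) {t : ℝ} (ht : 0 ≤ t) :
    dist x (S.ray x ξ t) = t := by
  have h := S.ray_isom x ξ 0 t le_rfl ht
  rw [S.ray_zero x ξ] at h
  rw [h, zero_sub, abs_neg, abs_of_nonneg ht]

lemma tendsto_sub_dist (ξ : S.bdry) (p : S.X) :
    Tendsto (fun T => T - dist (S.ray x ξ T) p) atTop (nhds (S.bus ξ x p)) := by
  refine Filter.Tendsto.congr' ?_ (S.bus_lim ξ x p x)
  filter_upwards [eventually_ge_atTop (0:ℝ)] with T hT
  rw [S.dist_ray_zero x ξ hT]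

lemma gp_nonneg {ξ η : S.bdry} (h : ξ ≠ η) : 0 ≤ S.gp x ξ η := by
  refine le_of_tendsto_of_tendsto (tendsto_const_nhds) (S.gp_lim x ξ η h) ?_
  filter_upwards [eventually_ge_atTop (0:ℝ)] with T hT
  have h1 : dist (S.ray x ξ T) (S.ray x η T) ≤ T + T := by
    calc dist (S.ray x ξ T) (S.ray x η T)
        ≤ dist (S.ray x ξ T) x + dist x (S.ray x η T) := dist_triangle _ _ _
      _ = T + T := by
          rw [dist_comm (S.ray x ξ T) x, S.dist_ray_zero x ξ hT, S.dist_ray_zero x η hT]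
  show (0:ℝ) ≤ T - dist (S.ray x ξ T) (S.ray x η T) / 2
  linarith

lemma gp_symm {ξ η : S.bdry} (h : ξ ≠ η) : S.gp x ξ η = S.gp x η ξ := by
  refine tendsto_nhds_unique (S.gp_lim x ξ η h) ?_
  refine (S.gp_lim x η ξ h.symm).congr fun T => ?_
  rw [dist_comm]

lemma stepB {ξ ζ : S.bdry} (h : ξ ≠ ζ) (p : S.X) :
    (S.bus ξ x p + S.bus ζ x p) / 2 ≤ S.gp x ξ ζ := by
  have h1 := S.tendsto_sub_dist x ξ p
  have h2 := S.tendsto_sub_dist x ζ p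
  refine le_of_tendsto_of_tendsto ((h1.add h2).div_const 2) (S.gp_lim x ξ ζ h) ?_
  filter_upwards [eventually_ge_atTop (0:ℝ)] with T hT
  have h3 : dist (S.ray x ξ T) (S.ray x ζ T) ≤
      dist (S.ray x ξ T) p + dist (S.ray x ζ T) p := by
    rw [dist_comm (S.ray x ζ T) p]
    exact dist_triangle _ _ _
  show (T - dist (S.ray x ξ T) p + (T - dist (S.ray x ζ T) p)) / 2
      ≤ T - dist (S.ray x ξ T) (S.ray x ζ T) / 2
  linarith

lemma stepA {ξ η : S.bdry} (h : ξ ≠ η) {t : ℝ} (ht : 0 ≤ t) :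
    exp (-(S.bus ξ x (S.ray x η t))) ≤
      exp (-t) + Real.sinh t * (2 * exp (-(2 * S.gp x ξ η))) := by
  have hEneg : Tendsto (fun T : ℝ => exp (-T)) atTop (nhds 0) :=
    Real.tendsto_exp_atBot.comp tendsto_neg_atTop_atBot
  have hE2 : Tendsto (fun T : ℝ => exp (-(2*T))) atTop (nhds 0) := by
    have h' := hEneg.mul hEneg
    have heq : ∀ T : ℝ, exp (-T) * exp (-T) = exp (-(2*T)) := by
      intro T; rw [← Real.exp_add]; ring_nf
    simpa [heq] using h'
  -- limit of d(ray ξ T, p) - T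
  have hB := S.tendsto_sub_dist x ξ (S.ray x η t)
  have hBneg : Tendsto (fun T => dist (S.ray x ξ T) (S.ray x η t) - T) atTop
      (nhds (-(S.bus ξ x (S.ray x η t)))) := by
    have h' := hB.neg
    refine h'.congr fun T => by ring
  have h1 : Tendsto (fun T => exp (dist (S.ray x ξ T) (S.ray x η t) - T)) atTop
      (nhds (exp (-(S.bus ξ x (S.ray x η t))))) :=
    (Real.continuous_exp.tendsto _).comp hBneg
  have h2 : Tendsto (fun T => exp (-dist (S.ray x ξ T) (S.ray x η t) - T)) atTop (nhds 0) := by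
    refine squeeze_zero (fun T => (Real.exp_pos _).le) (fun T => ?_) hEneg
    exact Real.exp_le_exp.2 (by linarith [dist_nonneg (x := S.ray x ξ T) (y := S.ray x η t)])
  have hF : Tendsto (fun T => (exp (dist (S.ray x ξ T) (S.ray x η t) - T) +
        exp (-dist (S.ray x ξ T) (S.ray x η t) - T)) * (1 - exp (-(2*T)))) atTop
      (nhds (exp (-(S.bus ξ x (S.ray x η t))))) := by
    have hc1 : Tendsto (fun _ : ℝ => (1:ℝ)) atTop (nhds 1) := tendsto_const_nhds
    have h' := (h1.add h2).mul (hc1.sub hE2)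
    simpa using h'
  -- limits for the right-hand side
  have hd2 : Tendsto (fun T => dist (S.ray x ξ T) (S.ray x η T) - 2*T) atTop
      (nhds (-(2 * S.gp x ξ η))) := by
    have h' := (S.gp_lim x ξ η h).const_mul (-2 : ℝ)
    have h'' : Tendsto (fun T : ℝ => dist (S.ray x ξ T) (S.ray x η T) - 2*T) atTop
        (nhds (-2 * S.gp x ξ η)) := h'.congr (fun T => by ring)
    convert h'' using 2
    ring
  have h3 : Tendsto (fun T => exp (dist (S.ray x ξ T) (S.ray x η T) - 2*T)) atTop
      (nhds (exp (-(2 * S.gp x ξ η)))) := (Real.continuous_exp.tendsto _).comp hd2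
  have h4 : Tendsto (fun T => exp (-dist (S.ray x ξ T) (S.ray x η T) - 2*T)) atTop (nhds 0) := by
    refine squeeze_zero (fun T => (Real.exp_pos _).le) (fun T => ?_) hE2
    exact Real.exp_le_exp.2
      (by linarith [dist_nonneg (x := S.ray x ξ T) (y := S.ray x η T)])
  have hG : Tendsto (fun T => (1 + exp (-(2*T))) * (exp (-t) - exp t * exp (-(2*T))) +
        Real.sinh t * (2 * (exp (dist (S.ray x ξ T) (S.ray x η T) - 2*T) +
          exp (-dist (S.ray x ξ T) (S.ray x η T) - 2*T)))) atTop
      (nhds (exp (-t) + Real.sinh t * (2 * exp (-(2 * S.gp x ξ η))))) := by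
    have hc1 : Tendsto (fun _ : ℝ => (1:ℝ)) atTop (nhds 1) := tendsto_const_nhds
    have hct : Tendsto (fun _ : ℝ => exp (-t)) atTop (nhds (exp (-t))) := tendsto_const_nhds
    have h' := ((hc1.add hE2).mul (hct.sub (hE2.const_mul (exp t)))).add
      (((h3.add h4).const_mul (2:ℝ)).const_mul (Real.sinh t))
    simpa using h'
  refine le_of_tendsto_of_tendsto hF hG ?_
  filter_upwards [eventually_ge_atTop (max t 0)] with T hT
  have hT0 : (0:ℝ) ≤ T := le_trans (le_max_right _ _) hT
  have hTt : t ≤ T := le_trans (le_max_left _ _) hT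
  -- the comparison inequality for x' = ray ξ T, geodesic from x to ray η T through ray η t
  have hcomp := S.comparison (S.ray x ξ T) x (S.ray x η T) (S.ray x η t) ?_
  swap
  · rw [S.dist_ray_zero x η ht, S.dist_ray_zero x η hT0,
      S.ray_isom x η t T ht hT0, abs_sub_comm, abs_of_nonneg (by linarith : (0:ℝ) ≤ T - t)]
    ring
  rw [S.dist_ray_zero x η hT0, S.dist_ray_zero x η ht,
    S.ray_isom x η t T ht hT0, abs_sub_comm, abs_of_nonneg (by linarith : (0:ℝ) ≤ T - t),
    dist_comm (S.ray x ξ T) x, S.dist_ray_zero x ξ hT0] at hcomp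
  rw [catm1_id1, catm1_id2, catm1_id3]
  have hmul := mul_le_mul_of_nonneg_left hcomp
    (by positivity : (0:ℝ) ≤ 4 * exp (-(2*T)))
  linarith [hmul]

end CATm1Boundary
end geo


open Classical in
/-- The visual distance `D_x(ξ,η) = exp (-(ξ|η)_x)` from `x` on the boundary. -/
noncomputable def CATm1Boundary.visDist (S : CATm1Boundary) (x : S.X) (ξ η : S.bdry) : ℝ :=
  if ξ = η then 0 else Real.exp (-(S.gp x ξ η))

/-- In a CAT(-1) space `X` with ideal boundary `X(∞)`, for a fixed
basepoint `x` the function `D_x(ξ,η) = exp(-(ξ|η)_x)` (with `D_x(ξ,ξ) = 0`)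
defines a metric on `X(∞)`. -/
theorem visDist_is_metric (S : CATm1Boundary) (x : S.X) :
    (∀ ξ η : S.bdry, 0 ≤ S.visDist x ξ η) ∧
    (∀ ξ η : S.bdry, S.visDist x ξ η = 0 ↔ ξ = η) ∧
    (∀ ξ η : S.bdry, S.visDist x ξ η = S.visDist x η ξ) ∧
    (∀ ξ η ζ : S.bdry, S.visDist x ξ ζ ≤ S.visDist x ξ η + S.visDist x η ζ) := by
  have hnonneg : ∀ ξ η : S.bdry, 0 ≤ S.visDist x ξ η := by
    intro ξ η
    unfold CATm1Boundary.visDist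
    split
    · exact le_refl 0
    · exact (Real.exp_pos _).le
  refine ⟨hnonneg, ?_, ?_, ?_⟩
  · intro ξ η
    by_cases h : ξ = η
    · simp [CATm1Boundary.visDist, h]
    · simp [CATm1Boundary.visDist, h, Real.exp_ne_zero]
  · intro ξ η
    by_cases h : ξ = η
    · rw [h]
    · unfold CATm1Boundary.visDist
      rw [if_neg h, if_neg (Ne.symm h), S.gp_symm x h]
  · intro ξ η ζ
    by_cases hxz : ξ = ζ
    · subst hxz
      have : S.visDist x ξ ξ = 0 := by simp [CATm1Boundary.visDist]
      rw [this]
      exact add_nonneg (hnonneg _ _) (hnonneg _ _)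
    by_cases hxy : ξ = η
    · subst hxy
      have : S.visDist x ξ ξ = 0 := by simp [CATm1Boundary.visDist]
      rw [this, zero_add]
    by_cases hyz : η = ζ
    · subst hyz
      have : S.visDist x η η = 0 := by simp [CATm1Boundary.visDist]
      rw [this, add_zero]
    -- main case: all distinct
    have hγ0 : 0 ≤ S.gp x ξ ζ := S.gp_nonneg x hxz
    simp only [CATm1Boundary.visDist, if_neg hxz, if_neg hxy, if_neg hyz]
    by_cases hbig : 1 ≤ Real.exp (-(S.gp x ξ η)) + Real.exp (-(S.gp x η ζ))
    · have h1 : Real.exp (-(S.gp x ξ ζ)) ≤ 1 := Real.exp_le_one_iff.2 (by linarith)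
      linarith
    push_neg at hbig
    obtain ⟨t, ht0, hkey⟩ := catm1_exists_t (Real.exp (-(S.gp x ξ η))) (Real.exp (-(S.gp x η ζ)))
      (Real.exp_pos _) (Real.exp_pos _) hbig
    have hPξ := S.stepA x hxy ht0
    have hPζ := S.stepA x (Ne.symm hyz) ht0
    rw [S.gp_symm x (Ne.symm hyz)] at hPζ
    have hBB := S.stepB x hxz (S.ray x η t)
    -- rewrite exp(-(2 gp)) as squares
    have ha : Real.exp (-(2 * S.gp x ξ η)) = Real.exp (-(S.gp x ξ η))^2 := by
      rw [show -(2 * S.gp x ξ η) = -(S.gp x ξ η) + -(S.gp x ξ η) by ring, Real.exp_add, sq]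
    have hb : Real.exp (-(2 * S.gp x η ζ)) = Real.exp (-(S.gp x η ζ))^2 := by
      rw [show -(2 * S.gp x η ζ) = -(S.gp x η ζ) + -(S.gp x η ζ) by ring, Real.exp_add, sq]
    rw [ha] at hPξ
    rw [hb] at hPζ
    have hsq : Real.exp (-(S.gp x ξ ζ)) * Real.exp (-(S.gp x ξ ζ)) ≤
        (Real.exp (-(S.gp x ξ η)) + Real.exp (-(S.gp x η ζ)))^2 := by
      calc Real.exp (-(S.gp x ξ ζ)) * Real.exp (-(S.gp x ξ ζ))
          = Real.exp (-(S.gp x ξ ζ) + -(S.gp x ξ ζ)) := (Real.exp_add _ _).symm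
        _ ≤ Real.exp (-(S.bus ξ x (S.ray x η t)) + -(S.bus ζ x (S.ray x η t))) :=
            Real.exp_le_exp.2 (by linarith)
        _ = Real.exp (-(S.bus ξ x (S.ray x η t))) * Real.exp (-(S.bus ζ x (S.ray x η t))) :=
            Real.exp_add _ _
        _ ≤ (Real.exp (-t) + Real.sinh t * (2 * Real.exp (-(S.gp x ξ η))^2)) *
            (Real.exp (-t) + Real.sinh t * (2 * Real.exp (-(S.gp x η ζ))^2)) :=
            mul_le_mul hPξ hPζ (Real.exp_pos _).le (le_trans (Real.exp_pos _).le hPξ)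
        _ ≤ (Real.exp (-(S.gp x ξ η)) + Real.exp (-(S.gp x η ζ)))^2 := hkey
    calc Real.exp (-(S.gp x ξ ζ))
        = Real.sqrt (Real.exp (-(S.gp x ξ ζ)) * Real.exp (-(S.gp x ξ ζ))) :=
          (Real.sqrt_mul_self (Real.exp_pos _).le).symm
      _ ≤ Real.sqrt ((Real.exp (-(S.gp x ξ η)) + Real.exp (-(S.gp x η ζ)))^2) := Real.sqrt_le_sqrt hsq
      _ = Real.exp (-(S.gp x ξ η)) + Real.exp (-(S.gp x η ζ)) := Real.sqrt_sq (by positivity)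
end

section
/- The cross-ratio [ξ₁,ξ₂,ξ₃,ξ₄] = D_x(ξ₁,ξ₃)D_x(ξ₂,ξ₄)/(D_x(ξ₁,ξ₄)D_x(ξ₂,ξ₃)) of four distinct boundary points of a CAT(-1) space does not depend on the choice of the basepoint x. -/
open Filter

lemma dist_ray (S : CATm1Boundary) (x : S.X) (ξ : S.bdry) {t : ℝ} (ht : 0 ≤ t) :
    dist x (S.ray x ξ t) = t := by
  have h := S.ray_isom x ξ 0 t le_rfl ht
  rw [S.ray_zero] at h
  rw [h, abs_of_nonpos (by linarith)]
  ring

lemma tendsto_param_sub_dist (S : CATm1Boundary) (ξ : S.bdry) (x y : S.X) :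
    Tendsto (fun t => t - dist (S.ray x ξ t) y) atTop (nhds (S.bus ξ x y)) := by
  apply (S.bus_lim ξ x y x).congr'
  filter_upwards [eventually_ge_atTop (0:ℝ)] with t ht
  rw [dist_ray S x ξ ht]

lemma tendsto_dist_ray_sub (S : CATm1Boundary) (ξ : S.bdry) (p y : S.X) :
    Tendsto (fun T => dist p (S.ray y ξ T) - T) atTop (nhds (S.bus ξ p y)) := by
  apply (S.bus_lim ξ p y y).congr'
  filter_upwards [eventually_ge_atTop (0:ℝ)] with T hT
  rw [dist_comm (S.ray y ξ T) y, dist_ray S y ξ hT]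

lemma bus_ray_pt (S : CATm1Boundary) (ξ : S.bdry) (x y : S.X) {t : ℝ} (ht : 0 ≤ t) :
    S.bus ξ (S.ray x ξ t) y = S.bus ξ x y - t := by
  refine tendsto_nhds_unique (S.bus_lim ξ (S.ray x ξ t) y x) ?_
  have h1 : Tendsto (fun u : ℝ => (u - dist (S.ray x ξ u) y) - t) atTop
      (nhds (S.bus ξ x y - t)) := (tendsto_param_sub_dist S ξ x y).sub_const t
  apply h1.congr'
  filter_upwards [eventually_ge_atTop t] with u hu
  rw [S.ray_isom x ξ t u ht (ht.trans hu), abs_of_nonpos (by linarith)]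
  ring

lemma cosh_mul_exp (u v : ℝ) : Real.cosh u * Real.exp (-v) =
    (Real.exp (u - v) + Real.exp (-(u - v)) * Real.exp (-(2*v))) / 2 := by
  have h1 : Real.exp (u - v) = Real.exp u * Real.exp (-v) := by
    rw [← Real.exp_add, sub_eq_add_neg]
  have h2 : Real.exp (-(u - v)) * Real.exp (-(2*v)) = Real.exp (-u) * Real.exp (-v) := by
    rw [← Real.exp_add, ← Real.exp_add]; congr 1; ring
  rw [Real.cosh_eq, h1, h2]; ring

lemma sinh_mul_exp (v : ℝ) : Real.sinh v * Real.exp (-v) =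
    (1 - Real.exp (-(2*v))) / 2 := by
  have h1 : Real.exp v * Real.exp (-v) = 1 := by
    rw [← Real.exp_add]; simp
  have h2 : Real.exp (-v) * Real.exp (-v) = Real.exp (-(2*v)) := by
    rw [← Real.exp_add]; congr 1; ring
  rw [Real.sinh_eq]
  nlinarith [h1, h2]

lemma tendsto_neg_two_mul (c : ℝ) :
    Tendsto (fun t : ℝ => Real.exp (-(2 * (t - c)))) atTop (nhds 0) := by
  apply Real.tendsto_exp_atBot.comp
  have h : Tendsto (fun t : ℝ => (-2) * t + 2*c) atTop atBot :=
    tendsto_atBot_add_const_right _ _ (tendsto_id.const_mul_atTop_of_neg (by norm_num))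
  apply h.congr
  intro t; ring

lemma cosh_div_sinh_lim (E : ℝ → ℝ) (c : ℝ)
    (h : Tendsto (fun T => E T - T) atTop (nhds c)) :
    Tendsto (fun T => Real.cosh (E T) / Real.sinh T) atTop (nhds (Real.exp c)) := by
  have hexp0 : Tendsto (fun T : ℝ => Real.exp (-(2 * T))) atTop (nhds 0) := by
    have h0 := tendsto_neg_two_mul 0
    simpa using h0
  have hnum : Tendsto (fun T => Real.cosh (E T) * Real.exp (-T)) atTop
      (nhds (Real.exp c / 2)) := by
    have h1 : Tendsto (fun T => Real.exp (E T - T)) atTop (nhds (Real.exp c)) :=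
      (Real.continuous_exp.tendsto c).comp h
    have h2 : Tendsto (fun T => Real.exp (-(E T - T)) * Real.exp (-(2 * T))) atTop
        (nhds (Real.exp (-c) * 0)) :=
      (((Real.continuous_exp.tendsto (-c)).comp h.neg)).mul hexp0
    have h3 := (h1.add h2).div_const 2
    rw [show (Real.exp c + Real.exp (-c) * 0) / 2 = Real.exp c / 2 by ring] at h3
    apply h3.congr
    intro T
    rw [cosh_mul_exp]
  have hden : Tendsto (fun T => Real.sinh T * Real.exp (-T)) atTop (nhds (1 / 2 : ℝ)) := by
    have h3 : Tendsto (fun T : ℝ => ((1:ℝ) - Real.exp (-(2*T))) / 2) atTop (nhds ((1 - 0)/2)) :=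
      (tendsto_const_nhds.sub hexp0).div_const 2
    rw [show ((1:ℝ) - 0) / 2 = 1 / 2 by ring] at h3
    apply h3.congr
    intro T
    rw [sinh_mul_exp]
  have h4 := hnum.div hden (by norm_num)
  rw [show Real.exp c / 2 / (1/2 : ℝ) = Real.exp c by ring] at h4
  apply h4.congr'
  filter_upwards [eventually_gt_atTop (0:ℝ)] with T hT
  have he : Real.exp (-T) ≠ 0 := Real.exp_ne_zero _
  simp only [Pi.div_apply]
  rw [mul_div_mul_right _ _ he]

lemma cosh_bound (S : CATm1Boundary) (ξ : S.bdry) (y p : S.X) (c : ℝ)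
    (hc : Tendsto (fun T => dist p (S.ray y ξ T) - T) atTop (nhds c))
    {s : ℝ} (hs : 0 ≤ s) :
    Real.cosh (dist p (S.ray y ξ s)) ≤
      Real.cosh (dist p y) * Real.exp (-s) + Real.exp c * Real.sinh s := by
  have lim1 : Tendsto (fun T : ℝ => Real.cosh (T - s) / Real.sinh T) atTop
      (nhds (Real.exp (-s))) := by
    apply cosh_div_sinh_lim
    have : (fun T : ℝ => (T - s) - T) = fun _ => -s := by funext T; ring
    rw [this]; exact tendsto_const_nhds
  have lim2 : Tendsto (fun T => Real.cosh (dist p (S.ray y ξ T)) / Real.sinh T) atTop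
      (nhds (Real.exp c)) := cosh_div_sinh_lim _ c hc
  have main := (lim1.const_mul (Real.cosh (dist p y))).add (lim2.mul_const (Real.sinh s))
  refine ge_of_tendsto main ?_
  filter_upwards [eventually_ge_atTop (max s 1)] with T hT
  have hTs : s ≤ T := le_trans (le_max_left _ _) hT
  have hT0 : (0:ℝ) < T := lt_of_lt_of_le one_pos (le_trans (le_max_right _ _) hT)
  have hT0' : (0:ℝ) ≤ T := hT0.le
  have hsinh : 0 < Real.sinh T := Real.sinh_pos_iff.mpr hT0
  have hbet : dist (S.ray y ξ 0) (S.ray y ξ s) + dist (S.ray y ξ s) (S.ray y ξ T) =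
      dist (S.ray y ξ 0) (S.ray y ξ T) := by
    rw [S.ray_isom y ξ 0 s le_rfl hs, S.ray_isom y ξ s T hs hT0',
      S.ray_isom y ξ 0 T le_rfl hT0', abs_of_nonpos (by linarith : (0:ℝ) - s ≤ 0),
      abs_of_nonpos (by linarith : s - T ≤ 0), abs_of_nonpos (by linarith : (0:ℝ) - T ≤ 0)]
    ring
  have hcomp := S.comparison p (S.ray y ξ 0) (S.ray y ξ T) (S.ray y ξ s) hbet
  rw [S.ray_isom y ξ 0 T le_rfl hT0', S.ray_isom y ξ s T hs hT0',
    S.ray_isom y ξ 0 s le_rfl hs, S.ray_zero,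
    abs_of_nonpos (by linarith : (0:ℝ) - T ≤ 0), abs_of_nonpos (by linarith : s - T ≤ 0),
    abs_of_nonpos (by linarith : (0:ℝ) - s ≤ 0)] at hcomp
  rw [show -((0:ℝ) - T) = T by ring, show -((0:ℝ) - s) = s by ring] at hcomp
  have hss : Real.sinh (-(s - T)) ≤ Real.cosh (T - s) := by
    rw [show -(s - T) = T - s by ring, Real.cosh_eq, Real.sinh_eq]
    have := Real.exp_pos (-(T - s)); linarith
  have hB : 0 ≤ Real.cosh (dist p y) := (Real.cosh_pos _).le
  have hrw : Real.cosh (dist p y) * (Real.cosh (T - s) / Real.sinh T) +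
      (Real.cosh (dist p (S.ray y ξ T)) / Real.sinh T) * Real.sinh s =
      (Real.cosh (dist p y) * Real.cosh (T - s) +
        Real.cosh (dist p (S.ray y ξ T)) * Real.sinh s) / Real.sinh T := by
    field_simp
  rw [hrw, le_div_iff₀ hsinh]
  nlinarith [mul_le_mul_of_nonneg_left hss hB]

lemma tendsto_dist_rays (S : CATm1Boundary) (ξ : S.bdry) (x y : S.X) :
    Tendsto (fun t => dist (S.ray x ξ t) (S.ray y ξ (t - S.bus ξ x y))) atTop (nhds 0) := by
  set β := S.bus ξ x y with hβ
  set D : ℝ → ℝ := fun t => dist (S.ray x ξ t) (S.ray y ξ (t - β)) with hD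
  have hcosh : Tendsto (fun t => Real.cosh (D t)) atTop (nhds 1) := by
    have hub : ∀ᶠ t in atTop, Real.cosh (D t) ≤
        Real.cosh (dist (S.ray x ξ t) y) * Real.exp (-(t - β)) +
          Real.exp (β - t) * Real.sinh (t - β) := by
      filter_upwards [eventually_ge_atTop β, eventually_ge_atTop (0:ℝ)] with t h1 h2
      have hc : Tendsto (fun T => dist (S.ray x ξ t) (S.ray y ξ T) - T) atTop
          (nhds (β - t)) := by
        have h := tendsto_dist_ray_sub S ξ (S.ray x ξ t) y
        rwa [bus_ray_pt S ξ x y h2] at h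
      exact cosh_bound S ξ y (S.ray x ξ t) (β - t) hc (by linarith)
    have hε : Tendsto (fun t => dist (S.ray x ξ t) y - (t - β)) atTop (nhds 0) := by
      have h := tendsto_param_sub_dist S ξ x y
      have h2 : Tendsto (fun t : ℝ => β - (t - dist (S.ray x ξ t) y)) atTop
          (nhds (β - β)) := tendsto_const_nhds.sub h
      rw [sub_self] at h2
      apply h2.congr; intro t; ring
    have hexp2 := tendsto_neg_two_mul β
    have h1 : Tendsto (fun t => Real.cosh (dist (S.ray x ξ t) y) * Real.exp (-(t - β)))
        atTop (nhds (1/2 : ℝ)) := by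
      have ha : Tendsto (fun t => Real.exp (dist (S.ray x ξ t) y - (t - β))) atTop
          (nhds 1) := by
        have h := (Real.continuous_exp.tendsto 0).comp hε
        simpa [Function.comp_def] using h
      have hb : Tendsto (fun t => Real.exp (-(dist (S.ray x ξ t) y - (t - β))) *
          Real.exp (-(2*(t - β)))) atTop (nhds (1 * 0)) := by
        refine Tendsto.mul ?_ hexp2
        have hε' := hε.neg
        rw [neg_zero] at hε'
        have h := (Real.continuous_exp.tendsto 0).comp hε'
        simpa [Function.comp_def] using h
      have h3 := (ha.add hb).div_const 2
      rw [show ((1:ℝ) + 1 * 0)/2 = 1/2 by ring] at h3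
      apply h3.congr
      intro t
      rw [cosh_mul_exp]
    have h2' : Tendsto (fun t => Real.exp (β - t) * Real.sinh (t - β)) atTop
        (nhds (1/2 : ℝ)) := by
      have h3 : Tendsto (fun t : ℝ => ((1:ℝ) - Real.exp (-(2*(t - β))))/2) atTop
          (nhds ((1 - 0)/2)) := (tendsto_const_nhds.sub hexp2).div_const 2
      rw [show ((1:ℝ) - 0)/2 = 1/2 by ring] at h3
      apply h3.congr
      intro t
      rw [← sinh_mul_exp, show -(t - β) = β - t by ring]
      ring
    have hR := h1.add h2'
    rw [show (1/2 : ℝ) + 1/2 = 1 by ring] at hR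
    have hlb : ∀ᶠ t in atTop, (1:ℝ) ≤ Real.cosh (D t) :=
      Eventually.of_forall fun t => Real.one_le_cosh _
    exact tendsto_of_tendsto_of_tendsto_of_le_of_le' tendsto_const_nhds hR hlb hub
  have hcont : ContinuousAt (fun c : ℝ => Real.log (c + Real.sqrt (c^2 - 1))) 1 := by
    have h1 : ContinuousAt (fun c : ℝ => c + Real.sqrt (c^2 - 1)) 1 := by fun_prop
    have h2 : ContinuousAt Real.log ((fun c : ℝ => c + Real.sqrt (c^2 - 1)) 1) := by
      apply Real.continuousAt_log
      simp only []
      rw [show (1:ℝ)^2 - 1 = 0 by ring, Real.sqrt_zero, add_zero]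
      norm_num
    exact ContinuousAt.comp (f := fun c : ℝ => c + Real.sqrt (c^2 - 1)) (x := (1:ℝ)) h2 h1
  have hcomp := hcont.tendsto.comp hcosh
  have h0 : Real.log ((1:ℝ) + Real.sqrt ((1:ℝ)^2 - 1)) = 0 := by
    rw [show (1:ℝ)^2 - 1 = 0 by ring, Real.sqrt_zero, add_zero, Real.log_one]
  rw [h0] at hcomp
  apply hcomp.congr
  intro t
  have hD0 : (0:ℝ) ≤ D t := dist_nonneg
  have hsq : Real.sqrt (Real.cosh (D t)^2 - 1) = Real.sinh (D t) := by
    rw [← Real.sinh_sq, Real.sqrt_sq (Real.sinh_nonneg_iff.mpr hD0)]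
  simp only [Function.comp]
  rw [hsq, Real.cosh_add_sinh, Real.log_exp]

lemma gp_eval (S : CATm1Boundary) {ξ η : S.bdry} (hne : ξ ≠ η) (y : S.X) (s u : ℝ → ℝ)
    (hs : Tendsto s atTop atTop) (hu : Tendsto u atTop atTop) :
    Tendsto (fun t => (s t + u t - dist (S.ray y ξ (s t)) (S.ray y η (u t))) / 2)
      atTop (nhds (S.gp y ξ η)) := by
  set h : ℝ → ℝ → ℝ := fun p q => (p + q - dist (S.ray y ξ p) (S.ray y η q)) / 2 with hh
  have hmono : ∀ p₁ p₂ q₁ q₂ : ℝ, 0 ≤ p₁ → p₁ ≤ p₂ → 0 ≤ q₁ → q₁ ≤ q₂ →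
      h p₁ q₁ ≤ h p₂ q₂ := by
    intro p₁ p₂ q₁ q₂ hp1 hp hq1 hq
    have t1 : dist (S.ray y ξ p₂) (S.ray y η q₂) ≤
        dist (S.ray y ξ p₂) (S.ray y ξ p₁) + dist (S.ray y ξ p₁) (S.ray y η q₁) +
          dist (S.ray y η q₁) (S.ray y η q₂) := dist_triangle4 _ _ _ _
    rw [S.ray_isom y ξ p₂ p₁ (hp1.trans hp) hp1, S.ray_isom y η q₁ q₂ hq1 (hq1.trans hq),
      abs_of_nonneg (by linarith : (0:ℝ) ≤ p₂ - p₁),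
      abs_of_nonpos (by linarith : q₁ - q₂ ≤ 0)] at t1
    simp only [hh]
    linarith
  have hdiag : Tendsto (fun t => h t t) atTop (nhds (S.gp y ξ η)) := by
    apply (S.gp_lim y ξ η hne).congr
    intro t
    simp only [hh]
    ring
  have hle : ∀ p q : ℝ, 0 ≤ p → 0 ≤ q → h p q ≤ S.gp y ξ η := by
    intro p q hp hq
    have h1 : h p q ≤ h (max p q) (max p q) :=
      hmono _ _ _ _ hp (le_max_left _ _) hq (le_max_right _ _)
    refine h1.trans (ge_of_tendsto hdiag ?_)
    filter_upwards [eventually_ge_atTop (max p q)] with T hT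
    exact hmono _ _ _ _ (le_trans hp (le_max_left _ _)) hT
      (le_trans hq (le_max_right _ _)) hT
  refine Metric.tendsto_nhds.mpr ?_
  intro ε hε
  obtain ⟨N, hNd, hN0⟩ : ∃ N : ℝ, dist (h N N) (S.gp y ξ η) < ε ∧ 0 ≤ N := by
    have := (Metric.tendsto_nhds.mp hdiag ε hε).and (eventually_ge_atTop (0:ℝ))
    exact this.exists
  filter_upwards [hs.eventually_ge_atTop N, hu.eventually_ge_atTop N] with t h1 h2
  have hs0 : 0 ≤ s t := hN0.trans h1
  have hu0 : 0 ≤ u t := hN0.trans h2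
  have hlow : h N N ≤ h (s t) (u t) := hmono _ _ _ _ hN0 h1 hN0 h2
  have hup : h (s t) (u t) ≤ S.gp y ξ η := hle _ _ hs0 hu0
  have hNle : h N N ≤ S.gp y ξ η := hle _ _ hN0 hN0
  rw [Real.dist_eq] at hNd ⊢
  rw [abs_of_nonpos (by linarith : h N N - S.gp y ξ η ≤ 0)] at hNd
  have : |(s t + u t - dist (S.ray y ξ (s t)) (S.ray y η (u t))) / 2 - S.gp y ξ η| =
      |h (s t) (u t) - S.gp y ξ η| := rfl
  rw [this, abs_of_nonpos (by linarith : h (s t) (u t) - S.gp y ξ η ≤ 0)]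
  linarith

lemma gp_basechange (S : CATm1Boundary) {ξ η : S.bdry} (hne : ξ ≠ η) (x y : S.X) :
    S.gp y ξ η = S.gp x ξ η - (S.bus ξ x y + S.bus η x y) / 2 := by
  set βξ := S.bus ξ x y with hbξ
  set βη := S.bus η x y with hbη
  set F : ℝ → ℝ := fun t => (dist (S.ray x ξ t) y + dist (S.ray x η t) y -
    dist (S.ray x ξ t) (S.ray x η t)) / 2 with hF
  have lim1 : Tendsto F atTop (nhds (S.gp x ξ η - (βξ + βη) / 2)) := by
    have h1 := tendsto_param_sub_dist S ξ x y
    have h2 := tendsto_param_sub_dist S η x y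
    have h3 := S.gp_lim x ξ η hne
    have h4 := (h3.sub (h1.div_const 2)).sub (h2.div_const 2)
    rw [show S.gp x ξ η - βξ / 2 - βη / 2 = S.gp x ξ η - (βξ + βη) / 2 by ring] at h4
    apply h4.congr
    intro t
    simp only [hF]
    ring
  have lim2 : Tendsto F atTop (nhds (S.gp y ξ η)) := by
    set G : ℝ → ℝ := fun t => ((t - βξ) + (t - βη) -
      dist (S.ray y ξ (t - βξ)) (S.ray y η (t - βη))) / 2 with hG
    have hGlim : Tendsto G atTop (nhds (S.gp y ξ η)) := by
      apply gp_eval S hne y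
      · exact tendsto_atTop_add_const_right _ (-βξ) tendsto_id
      · exact tendsto_atTop_add_const_right _ (-βη) tendsto_id
    have hDa := tendsto_dist_rays S ξ x y
    have hDb := tendsto_dist_rays S η x y
    have hdiff : Tendsto (fun t => F t - G t) atTop (nhds 0) := by
      have hbound : ∀ᶠ t in atTop, |F t - G t| ≤
          dist (S.ray x ξ t) (S.ray y ξ (t - βξ)) +
            dist (S.ray x η t) (S.ray y η (t - βη)) := by
        filter_upwards [eventually_ge_atTop βξ, eventually_ge_atTop βη] with t h1 h2
        set a := S.ray x ξ t
        set b := S.ray x η t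
        set a' := S.ray y ξ (t - βξ)
        set b' := S.ray y η (t - βη)
        have hd1 : dist a' y = t - βξ := by
          rw [dist_comm, dist_ray S y ξ (by linarith : (0:ℝ) ≤ t - βξ)]
        have hd2 : dist b' y = t - βη := by
          rw [dist_comm, dist_ray S y η (by linarith : (0:ℝ) ≤ t - βη)]
        have e1 : |dist a y - (t - βξ)| ≤ dist a a' := by
          rw [← hd1]; exact abs_dist_sub_le _ _ _
        have e2 : |dist b y - (t - βη)| ≤ dist b b' := by
          rw [← hd2]; exact abs_dist_sub_le _ _ _
        have e3 : |dist a b - dist a' b'| ≤ dist a a' + dist b b' := by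
          have t1 : |dist a b - dist a' b| ≤ dist a a' := abs_dist_sub_le _ _ _
          have t2 : |dist a' b - dist a' b'| ≤ dist b b' := by
            rw [dist_comm a' b, dist_comm a' b']
            exact abs_dist_sub_le _ _ _
          calc |dist a b - dist a' b'| ≤ |dist a b - dist a' b| + |dist a' b - dist a' b'| := by
                have := abs_add_le (dist a b - dist a' b) (dist a' b - dist a' b')
                simpa using this
            _ ≤ dist a a' + dist b b' := add_le_add t1 t2
        have hFG : F t - G t = ((dist a y - (t - βξ)) + (dist b y - (t - βη)) -
            (dist a b - dist a' b')) / 2 := by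
          simp only [hF, hG]
          ring
        rw [hFG]
        rw [abs_le] at e1 e2 e3 ⊢
        constructor <;> [skip; skip] <;> (try constructor) <;> nlinarith [e1.1, e1.2, e2.1, e2.2, e3.1, e3.2]
      have hsum : Tendsto (fun t => dist (S.ray x ξ t) (S.ray y ξ (t - βξ)) +
          dist (S.ray x η t) (S.ray y η (t - βη))) atTop (nhds 0) := by
        have := hDa.add hDb
        rwa [add_zero] at this
      have hneg : Tendsto (fun t => -(dist (S.ray x ξ t) (S.ray y ξ (t - βξ)) +
          dist (S.ray x η t) (S.ray y η (t - βη)))) atTop (nhds 0) := by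
        have := hsum.neg
        rwa [neg_zero] at this
      refine tendsto_of_tendsto_of_tendsto_of_le_of_le' hneg hsum ?_ ?_
      · filter_upwards [hbound] with t ht
        have := abs_le.mp ht
        linarith [this.1]
      · filter_upwards [hbound] with t ht
        exact le_trans (le_abs_self _) ht
    have := hGlim.add hdiff
    rw [add_zero] at this
    apply this.congr
    intro t
    ring
  exact tendsto_nhds_unique lim2 lim1


/-- The cross-ratio of four boundary points, defined via the visual distance from `x`. -/
noncomputable def CATm1Boundary.crossRatio (S : CATm1Boundary) (x : S.X)
    (ξ₁ ξ₂ ξ₃ ξ₄ : S.bdry) : ℝ :=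
  S.visDist x ξ₁ ξ₃ * S.visDist x ξ₂ ξ₄ / (S.visDist x ξ₁ ξ₄ * S.visDist x ξ₂ ξ₃)

/-- the cross-ratio of four distinct boundary points of a CAT(-1)
space does not depend on the choice of the basepoint. -/
theorem crossRatio_basepoint_independent (S : CATm1Boundary) (x y : S.X)
    (ξ₁ ξ₂ ξ₃ ξ₄ : S.bdry)
    (h12 : ξ₁ ≠ ξ₂) (h13 : ξ₁ ≠ ξ₃) (h14 : ξ₁ ≠ ξ₄)
    (h23 : ξ₂ ≠ ξ₃) (h24 : ξ₂ ≠ ξ₄) (h34 : ξ₃ ≠ ξ₄) :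
    S.crossRatio x ξ₁ ξ₂ ξ₃ ξ₄ = S.crossRatio y ξ₁ ξ₂ ξ₃ ξ₄ := by
  have e13 := gp_basechange S h13 x y
  have e24 := gp_basechange S h24 x y
  have e14 := gp_basechange S h14 x y
  have e23 := gp_basechange S h23 x y
  simp only [CATm1Boundary.crossRatio, CATm1Boundary.visDist, if_neg h13, if_neg h24,
    if_neg h14, if_neg h23]
  rw [← Real.exp_add, ← Real.exp_add, ← Real.exp_sub, ← Real.exp_add, ← Real.exp_add,
    ← Real.exp_sub, Real.exp_eq_exp]
  linarith
end
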